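/- arXiv:2601.19220 — 2 statements merged into one kernel-verified Lean document; each statement's English description precedes it below -/
import Mathlib

section
/- Let f : H → ℝ be a convex differentiable function on a real Hilbert space H with a minimizer x*. Let x : [0,∞) → H be a C² curve satisfying the ODE ẍ(t) + (α/t)ẋ(t) + ∇f(x(t)) = 0 for t > 0 with α ≥ 3 and ẋ(0) = 0. Then for all t > 0, f(x(t)) - f(x*) ≤ (α-1)‖x(0) - x*‖² / t². -/
/-!
The energy `E(t) = t² (f(x) - f(x*)) + ½‖2(x - x*) + t ẋ‖² + (α - 3)‖x - x*‖²` is nonincreasing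
along the flow: substituting the ODE, `E'(t) = 2t (f(x) - f(x*) - ⟪∇f(x), x - x*⟫) - (α - 3) t ‖ẋ‖²`,
and both terms are `≤ 0` by convexity and `α ≥ 3`. Hence
`t² (f(x(t)) - f(x*)) ≤ E(t) ≤ E(0) = (α - 1)‖x(0) - x*‖²`.
-/

open scoped RealInnerProductSpace

open Set

theorem HasGradientAt.comp_hasDerivAt {H : Type*} [NormedAddCommGroup H] [InnerProductSpace ℝ H]
    [CompleteSpace H] {f : H → ℝ} {g : H} {x : ℝ → H} {x' : H} {t : ℝ}
    (hf : HasGradientAt f g (x t)) (hx : HasDerivAt x x' t) :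
    HasDerivAt (f ∘ x) ⟪g, x'⟫ t := by
  simpa using hf.hasFDerivAt.comp_hasDerivAt t hx

namespace NesterovFlow

variable {H : Type*} [NormedAddCommGroup H] [InnerProductSpace ℝ H]

/-- The velocity `v` is a separate argument; along a solution it is `deriv x`. -/
noncomputable def energy (f : H → ℝ) (xstar : H) (α : ℝ) (x v : ℝ → H) (t : ℝ) : ℝ :=
  t ^ 2 * (f (x t) - f xstar) + ‖(2 : ℝ) • (x t - xstar) + t • v t‖ ^ 2 / 2
    + (α - 3) * ‖x t - xstar‖ ^ 2

variable {f : H → ℝ} {xstar : H} {α : ℝ} {x v : ℝ → H}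

theorem energy_zero (hv0 : v 0 = 0) :
    energy f xstar α x v 0 = (α - 1) * ‖x 0 - xstar‖ ^ 2 := by
  simp only [energy, hv0, norm_smul, smul_zero, add_zero]
  norm_num
  ring

theorem sq_mul_sub_le_energy (hα : 3 ≤ α) (t : ℝ) :
    t ^ 2 * (f (x t) - f xstar) ≤ energy f xstar α x v t := by
  have : 0 ≤ (α - 3) * ‖x t - xstar‖ ^ 2 := mul_nonneg (by linarith) (sq_nonneg _)
  unfold energy
  linarith [sq_nonneg ‖(2 : ℝ) • (x t - xstar) + t • v t‖]

theorem hasDerivAt_energy {t df : ℝ} {a : H} (hf : HasDerivAt (f ∘ x) df t)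
    (hx : HasDerivAt x (v t) t) (hv : HasDerivAt v a t) :
    HasDerivAt (energy f xstar α x v)
      (2 * t * (f (x t) - f xstar) + t ^ 2 * df
        + ⟪(2 : ℝ) • (x t - xstar) + t • v t, (3 : ℝ) • v t + t • a⟫
        + 2 * (α - 3) * ⟪x t - xstar, v t⟫) t := by
  have hu := hx.sub_const xstar
  have hg : HasDerivAt (fun s ↦ (2 : ℝ) • (x s - xstar) + s • v s) ((3 : ℝ) • v t + t • a) t :=
    ((hu.const_smul (2 : ℝ)).add ((hasDerivAt_id' t).smul hv)).congr_deriv (by module)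
  refine ((((hasDerivAt_pow 2 t).mul (hf.sub_const (f xstar))).add
    (hg.norm_sq.div_const 2)).add (hu.norm_sq.const_mul (α - 3))).congr_deriv ?_
  simp only [Function.comp]
  ring

theorem hasDerivAt_energy_of_ode {t : ℝ} {a g : H} (hf : HasDerivAt (f ∘ x) ⟪g, v t⟫ t)
    (hx : HasDerivAt x (v t) t) (hv : HasDerivAt v a t) (hode : t • a = -(α • v t) - t • g) :
    HasDerivAt (energy f xstar α x v)
      (2 * t * (f (x t) - f xstar - ⟪g, x t - xstar⟫) - (α - 3) * t * ‖v t‖ ^ 2) t := by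
  convert hasDerivAt_energy hf hx hv using 1
  rw [show (3 : ℝ) • v t + t • a = (3 - α) • v t - t • g by rw [hode]; module]
  simp only [inner_add_left, inner_add_right, inner_sub_right, inner_smul_left, inner_smul_right,
    real_inner_self_eq_norm_sq, real_inner_comm g, RCLike.conj_to_real]
  ring

theorem antitoneOn_energy [CompleteSpace H] {f' : H → H} {a : ℝ → H}
    (hgrad : ∀ y, HasGradientAt f (f' y) y) (hconv : ∀ y, f y + ⟪f' y, xstar - y⟫ ≤ f xstar)
    (hα : 3 ≤ α) (hx : ∀ t, HasDerivAt x (v t) t) (hv : ∀ t, HasDerivAt v (a t) t)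
    (hode : ∀ t > 0, a t + (α / t) • v t + f' (x t) = 0) :
    AntitoneOn (energy f xstar α x v) (Ici 0) := by
  have hfx t : HasDerivAt (f ∘ x) ⟪f' (x t), v t⟫ t := (hgrad (x t)).comp_hasDerivAt (hx t)
  refine antitoneOn_of_hasDerivWithinAt_nonpos (convex_Ici 0)
    (f' := fun t ↦ 2 * t * (f (x t) - f xstar - ⟪f' (x t), x t - xstar⟫) - (α - 3) * t * ‖v t‖ ^ 2)
    (fun t _ ↦ (hasDerivAt_energy (hfx t) (hx t) (hv t)).continuousAt.continuousWithinAt)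
    (fun t ht ↦ ?_) (fun t ht ↦ ?_)
  · rw [interior_Ici] at ht
    have hode' : t • a t = -(α • v t) - t • f' (x t) := by
      have := congrArg (t • ·) (hode t ht)
      simp only [smul_add, smul_smul, mul_div_cancel₀ α (ne_of_gt ht), smul_zero] at this
      rw [← sub_eq_zero, ← this]
      module
    exact (hasDerivAt_energy_of_ode (hfx t) (hx t) (hv t) hode').hasDerivWithinAt
  · rw [interior_Ici, mem_Ioi] at ht
    have hgap : f (x t) - f xstar - ⟪f' (x t), x t - xstar⟫ ≤ 0 := by
      have := hconv (x t)
      rw [← neg_sub, inner_neg_right] at this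
      linarith
    nlinarith [mul_nonneg (mul_nonneg (sub_nonneg.mpr hα) ht.le) (sq_nonneg ‖v t‖)]

end NesterovFlow

theorem stmt_3_general {H : Type*} [NormedAddCommGroup H] [InnerProductSpace ℝ H] [CompleteSpace H]
    (f : H → ℝ) (f' : H → H)
    (hgrad : ∀ y, HasGradientAt f (f' y) y)
    (hconv : ∀ y z : H, f y + ⟪f' y, z - y⟫ ≤ f z)
    (xstar : H)
    (α : ℝ) (hα : 3 ≤ α)
    (x : ℝ → H) (hx : ContDiff ℝ 2 x)
    (hode : ∀ t > (0 : ℝ), deriv (deriv x) t + (α / t) • deriv x t + f' (x t) = 0)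
    (hv0 : deriv x 0 = 0) :
    ∀ t > (0 : ℝ), f (x t) - f xstar ≤ (α - 1) * ‖x 0 - xstar‖ ^ 2 / t ^ 2 := by
  intro t ht
  obtain ⟨hxd, -, hvC1⟩ :=
    contDiff_succ_iff_deriv.mp (hx.of_le (by norm_num) : ContDiff ℝ (1 + 1) x)
  have hanti := NesterovFlow.antitoneOn_energy hgrad (fun y ↦ hconv y xstar) hα
    (fun s ↦ (hxd s).hasDerivAt) (fun s ↦ (hvC1.differentiable one_ne_zero s).hasDerivAt) hode
  have hdecay := hanti self_mem_Ici (mem_Ici.mpr ht.le) ht.le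
  rw [NesterovFlow.energy_zero hv0] at hdecay
  rw [le_div_iff₀ (by positivity), mul_comm]
  exact (NesterovFlow.sq_mul_sub_le_energy hα t).trans hdecay

theorem stmt_3 {H : Type*} [NormedAddCommGroup H] [InnerProductSpace ℝ H] [CompleteSpace H]
    (f : H → ℝ) (f' : H → H)
    (hgrad : ∀ y, HasGradientAt f (f' y) y)
    (hconv : ∀ y z : H, f y + ⟪f' y, z - y⟫ ≤ f z)
    (xstar : H) (hmin : ∀ y, f xstar ≤ f y)
    (α : ℝ) (hα : 3 ≤ α)
    (x : ℝ → H) (hx : ContDiff ℝ 2 x)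
    (hode : ∀ t > (0 : ℝ), deriv (deriv x) t + (α / t) • deriv x t + f' (x t) = 0)
    (hv0 : deriv x 0 = 0) :
    ∀ t > (0 : ℝ), f (x t) - f xstar ≤ (α - 1) * ‖x 0 - xstar‖ ^ 2 / t ^ 2 :=
  stmt_3_general f f' hgrad hconv xstar α hα x hx hode hv0
end

section
/- Let f_1, ..., f_K : H → ℝ be convex differentiable functions on a real Hilbert space, and let x : [0,∞) → H solve ẋ(t) = -v(t), where v(t) is the minimal-norm element of conv{∇f_1(x(t)),...,∇f_K(x(t))}. Then for every q ∈ H and every t > 0, min_{k∈[K]} (f_k(x(t)) - f_k(q)) ≤ ‖x(0) - q‖² / (2t). -/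
/-!
Along the flow `ẋ = -v`, with `v` the minimal-norm point of `conv {∇f_k(x)}`, the variational
inequality of the minimal-norm point gives `⟪v, ∇f_k(x)⟫ ≥ ‖v‖² ≥ 0`, so every `f_k ∘ x` is
nonincreasing. Writing `m = min_k (f_k(x t) - f_k q)`, for `s ≤ t` convexity and monotonicity give
`m ≤ f_k(x s) - f_k q ≤ ⟪∇f_k(x s), x s - q⟫` for every `k`; the half-space this describes is
convex and contains `v s`, so `d/ds ½‖x s - q‖² = -⟪v s, x s - q⟫ ≤ -m`. Integrating over
`[0, t]` gives `t m ≤ ½‖x 0 - q‖²`.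
-/

open scoped RealInnerProductSpace
open Set

section

variable {H : Type*} [NormedAddCommGroup H] [InnerProductSpace ℝ H]

theorem Convex.norm_sq_le_inner_of_forall_norm_le {s : Set H} (hs : Convex ℝ s) {v u : H}
    (hv : v ∈ s) (hu : u ∈ s) (hmin : ∀ u ∈ s, ‖v‖ ≤ ‖u‖) : ‖v‖ ^ 2 ≤ ⟪v, u⟫ := by
  have : Nonempty s := ⟨⟨v, hv⟩⟩
  have hinf : ‖0 - v‖ = ⨅ w : s, ‖0 - (w : H)‖ := by
    simp only [zero_sub, norm_neg]
    exact le_antisymm (le_ciInf fun w => hmin w w.2)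
      (ciInf_le (f := fun w : s => ‖(w : H)‖) ⟨0, forall_mem_range.2 fun _ => norm_nonneg _⟩
        ⟨v, hv⟩)
  have := (norm_eq_iInf_iff_real_inner_le_zero hs hv).1 hinf u hu
  rw [zero_sub, inner_neg_left, inner_sub_right, real_inner_self_eq_norm_sq] at this
  linarith

theorem convex_setOf_le_inner (m : ℝ) (y : H) : Convex ℝ {g : H | m ≤ ⟪g, y⟫} :=
  convex_halfSpace_ge ((innerₛₗ ℝ).flip y).isLinear m

theorem sub_le_inner_of_forall_add_inner_le {f : H → ℝ} {f' : H → H}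
    (hconv : ∀ y z, f y + ⟪f' y, z - y⟫ ≤ f z) (y q : H) : f y - f q ≤ ⟪f' y, y - q⟫ := by
  have := hconv y q
  rw [← neg_sub, inner_neg_right] at this
  linarith

theorem antitone_comp_of_inner_gradient_deriv_nonpos [CompleteSpace H] {f : H → ℝ} {f' : H → H}
    (hf : ∀ y, HasGradientAt f (f' y) y) {x : ℝ → H} (hx : Differentiable ℝ x)
    (h : ∀ s, ⟪f' (x s), deriv x s⟫ ≤ 0) : Antitone fun s => f (x s) := by
  have hderiv (s : ℝ) : HasDerivAt (fun s => f (x s)) ⟪f' (x s), deriv x s⟫ s :=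
    (hf (x s)).hasFDerivAt.comp_hasDerivAt s (hx s).hasDerivAt
  exact antitone_of_deriv_nonpos (fun s => (hderiv s).differentiableAt)
    fun s => (hderiv s).deriv ▸ h s

theorem norm_sub_sq_add_le_of_inner_deriv_le {x : ℝ → H} (hx : Differentiable ℝ x) (q : H)
    {m t : ℝ} (ht : 0 ≤ t) (h : ∀ s ∈ Ioo 0 t, ⟪deriv x s, x s - q⟫ ≤ -m) :
    ‖x t - q‖ ^ 2 + t * (2 * m) ≤ ‖x 0 - q‖ ^ 2 := by
  set G : ℝ → ℝ := fun s => ‖x s - q‖ ^ 2 + s * (2 * m)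
  have hG (s : ℝ) : HasDerivAt G (2 * ⟪x s - q, deriv x s⟫ + 2 * m) s :=
    ((hx s).hasDerivAt.sub_const q).norm_sq.add (hasDerivAt_mul_const _)
  have hanti : AntitoneOn G (Icc 0 t) := by
    refine antitoneOn_of_deriv_nonpos (convex_Icc 0 t)
      (fun s _ => (hG s).continuousAt.continuousWithinAt)
      (fun s _ => (hG s).differentiableAt.differentiableWithinAt) fun s hs => ?_
    rw [interior_Icc] at hs
    rw [(hG s).deriv, real_inner_comm]
    linarith [h s hs]
  simpa [G] using hanti (left_mem_Icc.2 ht) (right_mem_Icc.2 ht) ht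

end

theorem stmt_10 {H : Type*} [NormedAddCommGroup H] [InnerProductSpace ℝ H] [CompleteSpace H]
    (K : ℕ) [NeZero K] (f : Fin K → H → ℝ) (f' : Fin K → H → H)
    (hgrad : ∀ k y, HasGradientAt (f k) (f' k y) y)
    (hconv : ∀ k, ∀ y z : H, f k y + ⟪f' k y, z - y⟫ ≤ f k z)
    (x : ℝ → H) (hx : Differentiable ℝ x)
    (w : ℝ → Fin K → ℝ)
    (hw : ∀ t, (∀ k, 0 ≤ w t k) ∧ ∑ k, w t k = 1)
    (hode : ∀ t, deriv x t = -∑ k, w t k • f' k (x t))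
    (hminnorm : ∀ t, ∀ u ∈ convexHull ℝ (Set.range fun k => f' k (x t)),
      ‖∑ k, w t k • f' k (x t)‖ ≤ ‖u‖) :
    ∀ q : H, ∀ t > (0 : ℝ),
      Finset.univ.inf' Finset.univ_nonempty (fun k => f k (x t) - f k q) ≤
        ‖x 0 - q‖ ^ 2 / (2 * t) := by
  intro q t ht
  have hv_mem (s : ℝ) : ∑ k, w s k • f' k (x s) ∈ convexHull ℝ (range fun k => f' k (x s)) :=
    (convex_convexHull ℝ _).sum_mem (fun k _ => (hw s).1 k) (hw s).2
      fun k _ => subset_convexHull ℝ _ ⟨k, rfl⟩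
  have hanti (k : Fin K) : Antitone fun s => f k (x s) := by
    refine antitone_comp_of_inner_gradient_deriv_nonpos (hgrad k) hx fun s => ?_
    rw [hode s, inner_neg_right, neg_nonpos, real_inner_comm]
    exact (sq_nonneg _).trans ((convex_convexHull ℝ _).norm_sq_le_inner_of_forall_norm_le
      (hv_mem s) (subset_convexHull ℝ _ ⟨k, rfl⟩) (hminnorm s))
  set m := Finset.univ.inf' Finset.univ_nonempty fun k => f k (x t) - f k q
  have hdecay : ∀ s ∈ Ioo 0 t, ⟪deriv x s, x s - q⟫ ≤ -m := by
    intro s hs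
    have hgrad_bound (k : Fin K) : m ≤ ⟪f' k (x s), x s - q⟫ :=
      calc m ≤ f k (x t) - f k q := Finset.inf'_le _ (Finset.mem_univ k)
        _ ≤ f k (x s) - f k q := sub_le_sub_right (hanti k hs.2.le) _
        _ ≤ ⟪f' k (x s), x s - q⟫ := sub_le_inner_of_forall_add_inner_le (hconv k) _ _
    rw [hode s, inner_neg_left, neg_le_neg_iff]
    exact convexHull_min (t := {g | m ≤ ⟪g, x s - q⟫}) (range_subset_iff.2 hgrad_bound)
      (convex_setOf_le_inner m _) (hv_mem s)
  have hbound := norm_sub_sq_add_le_of_inner_deriv_le hx q ht.le hdecay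
  rw [le_div_iff₀ (by positivity)]
  linarith [sq_nonneg ‖x t - q‖]
end
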